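/- Let I be a nonnegative random variable on a probability space (Ω, 𝒜, P), let τ > 0, let N be a positive integer, set a_N = N·(N!)^{−1/N}, and let g be a normalized-Gamma(N) random variable independent of I. Then P(I < τ·g) ≤ Σ_{n=1}^{N} (−1)^{n+1} · binom(N, n) · E[exp(−a_N n I / τ)]. -/

import Mathlib

/-!
Write `F` for the CDF of `γ_N` and `H(t) = (1 - e^{-a t})^N` for Alzer's lower bound. For `t > 0`
the density of `γ_N` is `H'(t) e^{ψ(t)}` with
`ψ(t) = (N - 1) log (a t / (1 - e^{-a t})) - (N - a) t`, and `(1 - e^{-a t}) / (a t) = E[e^{-a t U}]`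
for `U` uniform on `[0, 1]`. So `ψ` is a negative multiple of a cumulant generating function minus
a linear term: it is concave with `ψ(0) = 0`. Hence `F' - H'` is nonnegative up to some point and
nonpositive afterwards, and since `F - H` vanishes at `0` and at infinity, `H ≤ F`. By independence
`P(I < τ g) = E[γ_N(I/τ, ∞)] ≤ E[1 - H(I/τ)]`, and the binomial theorem expands `1 - H` into the
alternating sum of Laplace transforms.
-/

open MeasureTheory ProbabilityTheory Set Filter Topology

namespace ProbabilityTheory

lemma integrable_gammaPDFReal {a r : ℝ} (ha : 0 < a) (hr : 0 < r) :
    Integrable (gammaPDFReal a r) := by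
  refine ⟨(measurable_gammaPDFReal a r).aestronglyMeasurable, ?_⟩
  rw [hasFiniteIntegral_iff_ofReal (ae_of_all _ (gammaPDFReal_nonneg ha hr))]
  exact (lintegral_gammaPDF_eq_one ha hr).trans_lt ENNReal.one_lt_top

lemma continuousAt_gammaPDFReal {a r t : ℝ} (ht : 0 < t) :
    ContinuousAt (gammaPDFReal a r) t := by
  have h : (fun x ↦ r ^ a / Real.Gamma a * x ^ (a - 1) * Real.exp (-(r * x))) =ᶠ[𝓝 t]
      gammaPDFReal a r := by
    filter_upwards [Ici_mem_nhds ht] with x hx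
    exact (if_pos hx).symm
  refine ContinuousAt.congr ?_ h
  have := Real.continuousAt_rpow_const t (a - 1) (Or.inl ht.ne')
  fun_prop

lemma hasDerivAt_cdf_gammaMeasure {a r t : ℝ} (ha : 0 < a) (hr : 0 < r) (ht : 0 < t) :
    HasDerivAt (cdf (gammaMeasure a r)) (gammaPDFReal a r t) t := by
  have hint := integrable_gammaPDFReal ha hr
  have hcdf : cdf (gammaMeasure a r)
      = fun x ↦ cdf (gammaMeasure a r) 0 + ∫ y in 0..x, gammaPDFReal a r y := by
    ext x
    rw [cdf_gammaMeasure_eq_integral ha hr, cdf_gammaMeasure_eq_integral ha hr,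
      ← intervalIntegral.integral_Iic_sub_Iic hint.integrableOn hint.integrableOn]
    ring
  rw [hcdf]
  exact (intervalIntegral.integral_hasDerivAt_right hint.intervalIntegrable
    (measurable_gammaPDFReal a r).stronglyMeasurable.stronglyMeasurableAtFilter
    (continuousAt_gammaPDFReal ht)).const_add _

lemma cdf_gammaMeasure_zero {a r : ℝ} (ha : 0 < a) (hr : 0 < r) :
    cdf (gammaMeasure a r) 0 = 0 := by
  rw [cdf_gammaMeasure_eq_lintegral ha hr, lintegral_Iic_eq_lintegral_Iio_add_Icc _ le_rfl,
    lintegral_gammaPDF_of_nonpos le_rfl]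
  simp

lemma convexOn_cgf {Ω : Type*} [MeasurableSpace Ω] {X : Ω → ℝ} {μ : Measure Ω}
    (h : ∀ t, Integrable (fun ω ↦ Real.exp (t * X ω)) μ) : ConvexOn ℝ univ (cgf X μ) := by
  have hset : interior (integrableExpSet X μ) = univ := by
    rw [show integrableExpSet X μ = univ from eq_univ_of_forall h, interior_univ]
  have hanalytic : AnalyticOnNhd ℝ (cgf X μ) univ := hset ▸ analyticOnNhd_cgf
  refine convexOn_univ_of_deriv2_nonneg (fun t ↦ (hanalytic t trivial).differentiableAt)
    (fun t ↦ (hanalytic.deriv t trivial).differentiableAt) fun t ↦ ?_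
  rw [← iteratedDeriv_eq_iterate, iteratedDeriv_two_cgf_eq_integral (hset ▸ mem_univ t)]
  exact div_nonneg (integral_nonneg fun ω ↦ by positivity) mgf_nonneg

end ProbabilityTheory

instance : IsProbabilityMeasure (volume.restrict (Ioc (0 : ℝ) 1)) := ⟨by simp⟩

lemma integral_exp_mul_unitInterval {c : ℝ} (hc : c ≠ 0) :
    ∫ x in (0 : ℝ)..1, Real.exp (c * x) = (Real.exp c - 1) / c := by
  rw [intervalIntegral.integral_comp_mul_left (fun x ↦ Real.exp x) hc, integral_exp, mul_zero,
    mul_one, Real.exp_zero, smul_eq_mul, inv_mul_eq_div]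

lemma integrable_exp_mul_unitInterval {X : ℝ → ℝ} (hX : Continuous X) (t : ℝ) :
    Integrable (fun x ↦ Real.exp (t * X x)) (volume.restrict (Ioc (0 : ℝ) 1)) :=
  (Continuous.integrableOn_Icc (by fun_prop)).mono_set Ioc_subset_Icc_self

lemma one_sub_one_sub_pow {R : Type*} [CommRing R] (u : R) (N : ℕ) :
    1 - (1 - u) ^ N = ∑ n ∈ Finset.Icc 1 N, (-1) ^ (n + 1) * (N.choose n : R) * u ^ n := by
  rw [← Finset.Ico_add_one_right_eq_Icc, Finset.sum_Ico_eq_sum_range, Nat.add_sub_cancel,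
    sub_eq_neg_add (1 : R) u, add_pow, Finset.sum_range_succ']
  simp only [one_pow, mul_one, pow_zero, Nat.choose_zero_right, Nat.cast_one]
  rw [sub_add_cancel_right, ← Finset.sum_neg_distrib]
  refine Finset.sum_congr rfl fun n _ ↦ ?_
  rw [add_comm 1 n, neg_pow, pow_succ]
  ring

lemma ConcaveOn.nonneg_of_le_of_nonneg {f : ℝ → ℝ} (hf : ConcaveOn ℝ (Ici 0) f) (h0 : f 0 = 0)
    {s t : ℝ} (hs : 0 ≤ s) (hst : s ≤ t) (ht : 0 ≤ f t) : 0 ≤ f s := by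
  rcases hs.eq_or_lt with rfl | hs
  · exact h0.ge
  have htpos : 0 < t := hs.trans_le hst
  have h := hf.2 (mem_Ici.mpr htpos.le) (mem_Ici.mpr le_rfl) (div_nonneg hs.le htpos.le)
    (sub_nonneg.mpr ((div_le_one htpos).mpr hst)) (add_sub_cancel _ _)
  simp only [smul_eq_mul, h0, mul_zero, add_zero] at h
  rw [div_mul_cancel₀ _ htpos.ne'] at h
  exact (mul_nonneg (div_nonneg hs.le htpos.le) ht).trans h

lemma nonneg_of_deriv_nonneg_before_nonpos_after {G G' : ℝ → ℝ}
    (hcont : ContinuousWithinAt G (Ici 0) 0) (hderiv : ∀ t, 0 < t → HasDerivAt G (G' t) t)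
    (h0 : G 0 = 0) (htop : Tendsto G atTop (𝓝 0))
    (hsign : ∀ s t, 0 < s → s ≤ t → 0 ≤ G' t → 0 ≤ G' s) {t : ℝ} (ht : 0 ≤ t) : 0 ≤ G t := by
  rcases ht.eq_or_lt with rfl | ht
  · exact h0.ge
  have hcontOn : ContinuousOn G (Ici 0) := by
    intro u hu
    rcases (mem_Ici.mp hu).eq_or_lt with rfl | hu
    · exact hcont
    · exact (hderiv u hu).continuousAt.continuousWithinAt
  by_cases hGt : 0 ≤ G' t
  · have hmono : MonotoneOn G (Icc 0 t) := by
      refine monotoneOn_of_deriv_nonneg (convex_Icc 0 t) (hcontOn.mono Icc_subset_Ici_self)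
        (fun u hu ↦ ?_) fun u hu ↦ ?_ <;> rw [interior_Icc] at hu
      · exact (hderiv u hu.1).differentiableAt.differentiableWithinAt
      · rw [(hderiv u hu.1).deriv]
        exact hsign u t hu.1 hu.2.le hGt
    simpa [h0] using hmono (left_mem_Icc.mpr ht.le) (right_mem_Icc.mpr ht.le) ht.le
  · have hanti : AntitoneOn G (Ici t) := by
      refine antitoneOn_of_deriv_nonpos (convex_Ici t) (hcontOn.mono (Ici_subset_Ici.mpr ht.le))
        (fun u hu ↦ ?_) fun u hu ↦ ?_ <;> rw [interior_Ici] at hu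
      · exact (hderiv u (ht.trans hu)).differentiableAt.differentiableWithinAt
      · rw [(hderiv u (ht.trans hu)).deriv]
        by_contra! hu'
        exact hGt (hsign t u ht hu.le hu'.le)
    exact le_of_tendsto htop (eventually_ge_atTop t |>.mono fun u hu ↦ hanti self_mem_Ici hu hu)

noncomputable def alzerConst (N : ℕ) : ℝ := N * (N.factorial : ℝ) ^ (-(1 : ℝ) / N)

noncomputable def alzerBound (N : ℕ) (t : ℝ) : ℝ := (1 - Real.exp (-(alzerConst N * t))) ^ N

noncomputable def alzerBoundDeriv (N : ℕ) (t : ℝ) : ℝ :=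
  N * alzerConst N * Real.exp (-(alzerConst N * t)) *
    (1 - Real.exp (-(alzerConst N * t))) ^ (N - 1)

/-- `log (gammaPDFReal N N t / alzerBoundDeriv N t)` for `t > 0`, written through a cumulant
generating function so that it is visibly concave on all of `ℝ`. -/
noncomputable def alzerLogRatio (N : ℕ) (t : ℝ) : ℝ :=
  -((N - 1 : ℕ) * cgf (fun x ↦ -(alzerConst N * x)) (volume.restrict (Ioc (0 : ℝ) 1)) t)
    - (N - alzerConst N) * t

section Alzer

variable {N : ℕ}

lemma alzerConst_pos (hN : 0 < N) : 0 < alzerConst N := by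
  unfold alzerConst
  have : (0 : ℝ) < N := by exact_mod_cast hN
  positivity

lemma alzerConst_pow (hN : 0 < N) : alzerConst N ^ N = (N : ℝ) ^ N / N.factorial := by
  have hN' : (N : ℝ) ≠ 0 := by exact_mod_cast hN.ne'
  rw [alzerConst, mul_pow, ← Real.rpow_natCast ((N.factorial : ℝ) ^ _), ← Real.rpow_mul
    (Nat.cast_nonneg _), div_mul_cancel₀ _ hN', Real.rpow_neg_one, div_eq_mul_inv]

lemma hasDerivAt_alzerBound (t : ℝ) : HasDerivAt (alzerBound N) (alzerBoundDeriv N t) t := by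
  have hlin : HasDerivAt (fun t ↦ -(alzerConst N * t)) (-alzerConst N) t := by
    simpa using ((hasDerivAt_id t).const_mul (alzerConst N)).fun_neg
  refine ((hlin.exp.const_sub 1).fun_pow N).congr_deriv ?_
  unfold alzerBoundDeriv
  ring

lemma exp_neg_alzerConst_mul_lt_one (hN : 0 < N) {t : ℝ} (ht : 0 < t) :
    Real.exp (-(alzerConst N * t)) < 1 :=
  Real.exp_lt_one_iff.mpr (neg_neg_of_pos (mul_pos (alzerConst_pos hN) ht))

lemma alzerBoundDeriv_pos (hN : 0 < N) {t : ℝ} (ht : 0 < t) : 0 < alzerBoundDeriv N t := by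
  have ha := alzerConst_pos hN
  have hN' : (0 : ℝ) < N := by exact_mod_cast hN
  have hu := sub_pos.mpr (exp_neg_alzerConst_mul_lt_one hN ht)
  unfold alzerBoundDeriv
  positivity

lemma tendsto_alzerBound_atTop (hN : 0 < N) : Tendsto (alzerBound N) atTop (𝓝 1) := by
  have h : Tendsto (fun t ↦ -(alzerConst N * t)) atTop atBot :=
    tendsto_neg_atTop_atBot.comp (tendsto_id.const_mul_atTop (alzerConst_pos hN))
  have h := ((Real.tendsto_exp_atBot.comp h).const_sub 1).pow N
  rwa [sub_zero, one_pow] at h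

lemma concaveOn_alzerLogRatio : ConcaveOn ℝ univ (alzerLogRatio N) := by
  have hcgf := (convexOn_cgf (integrable_exp_mul_unitInterval
    (X := fun x ↦ -(alzerConst N * x)) (by fun_prop))).smul (Nat.cast_nonneg (α := ℝ) (N - 1))
  exact hcgf.neg.sub ((LinearMap.mulLeft ℝ (N - alzerConst N)).convexOn convex_univ)

lemma alzerLogRatio_zero : alzerLogRatio N 0 = 0 := by
  simp [alzerLogRatio, cgf_zero]

lemma exp_alzerLogRatio (hN : 0 < N) {t : ℝ} (ht : 0 < t) :
    Real.exp (alzerLogRatio N t)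
      = (alzerConst N * t / (1 - Real.exp (-(alzerConst N * t)))) ^ (N - 1)
        * Real.exp (-((N - alzerConst N) * t)) := by
  have hat : alzerConst N * t ≠ 0 := (mul_pos (alzerConst_pos hN) ht).ne'
  have hmgf : mgf (fun x ↦ -(alzerConst N * x)) (volume.restrict (Ioc (0 : ℝ) 1)) t
      = (1 - Real.exp (-(alzerConst N * t))) / (alzerConst N * t) := by
    rw [mgf, ← intervalIntegral.integral_of_le zero_le_one]
    have hlin : ∀ x, t * -(alzerConst N * x) = -(alzerConst N * t) * x := fun x ↦ by ring
    simp_rw [hlin]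
    rw [integral_exp_mul_unitInterval (neg_ne_zero.mpr hat)]
    field_simp
    ring
  rw [alzerLogRatio, sub_eq_add_neg, Real.exp_add, Real.exp_neg, Real.exp_nat_mul,
    exp_cgf (integrable_exp_mul_unitInterval (by fun_prop) t), hmgf, ← inv_pow, inv_div]

lemma gammaPDFReal_eq_alzerBoundDeriv_mul_exp (hN : 0 < N) {t : ℝ} (ht : 0 < t) :
    gammaPDFReal N N t = alzerBoundDeriv N t * Real.exp (alzerLogRatio N t) := by
  obtain ⟨M, rfl⟩ := Nat.exists_eq_add_one_of_ne_zero hN.ne'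
  have hpow := alzerConst_pow hN
  have hu := sub_pos.mpr (exp_neg_alzerConst_mul_lt_one hN ht)
  have hexp : Real.exp (-(alzerConst (M + 1) * t))
      * Real.exp (-((((M + 1 : ℕ) : ℝ) - alzerConst (M + 1)) * t))
      = Real.exp (-((M + 1 : ℕ) * t)) := by
    rw [← Real.exp_add]
    ring_nf
  rw [exp_alzerLogRatio hN ht, gammaPDFReal, if_pos ht.le, alzerBoundDeriv, Nat.add_sub_cancel,
    Real.rpow_natCast, Nat.cast_add_one, add_sub_cancel_right, Real.Gamma_nat_eq_factorial,
    ← Nat.cast_add_one, Real.rpow_natCast, div_pow, ← hexp]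
  rw [Nat.factorial_succ, Nat.cast_mul, pow_succ, eq_div_iff (by positivity)] at hpow
  field_simp
  rw [← hpow]
  ring

lemma alzerBound_le_cdf_gammaMeasure (hN : 0 < N) {t : ℝ} (ht : 0 ≤ t) :
    alzerBound N t ≤ cdf (gammaMeasure N N) t := by
  have hN' : (0 : ℝ) < N := by exact_mod_cast hN
  have hcontH : Continuous (alzerBound N) := by unfold alzerBound; fun_prop
  have hsign : ∀ u, 0 < u →
      (0 ≤ gammaPDFReal N N u - alzerBoundDeriv N u ↔ 0 ≤ alzerLogRatio N u) := fun u hu ↦ by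
    rw [gammaPDFReal_eq_alzerBoundDeriv_mul_exp hN hu, ← mul_sub_one,
      mul_nonneg_iff_of_pos_left (alzerBoundDeriv_pos hN hu), sub_nonneg, Real.one_le_exp_iff]
  have hconcave := (concaveOn_alzerLogRatio (N := N)).subset (subset_univ _) (convex_Ici 0)
  rw [← sub_nonneg]
  refine nonneg_of_deriv_nonneg_before_nonpos_after
    ((cdf _).right_continuous 0 |>.sub hcontH.continuousWithinAt)
    (fun u hu ↦ (hasDerivAt_cdf_gammaMeasure hN' hN' hu).sub (hasDerivAt_alzerBound u))
    ?_ ?_ (fun s u hs hsu hu ↦ ?_) ht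
  · simp [cdf_gammaMeasure_zero hN' hN', alzerBound, zero_pow hN.ne']
  · have h := (tendsto_cdf_atTop (gammaMeasure N N)).sub (tendsto_alzerBound_atTop hN)
    rwa [sub_self] at h
  · exact (hsign s hs).mpr (hconcave.nonneg_of_le_of_nonneg alzerLogRatio_zero hs.le hsu
      ((hsign u (hs.trans_le hsu)).mp hu))

lemma measureReal_Ioi_gammaMeasure_le (hN : 0 < N) {t : ℝ} (ht : 0 ≤ t) :
    (gammaMeasure N N).real (Ioi t) ≤ 1 - alzerBound N t := by
  have hN' : (0 : ℝ) < N := by exact_mod_cast hN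
  have := isProbabilityMeasure_gammaMeasure hN' hN'
  rw [← compl_Iic, probReal_compl_eq_one_sub measurableSet_Iic, ← cdf_eq_real]
  linarith [alzerBound_le_cdf_gammaMeasure hN ht]

end Alzer

section

variable {Ω : Type*} [MeasurableSpace Ω] {P : Measure Ω}

lemma integral_one_sub_one_sub_pow {f : Ω → ℝ} (hf : ∀ n : ℕ, Integrable (fun ω ↦ f ω ^ n) P)
    (N : ℕ) :
    ∫ ω, 1 - (1 - f ω) ^ N ∂P
      = ∑ n ∈ Finset.Icc 1 N, (-1) ^ (n + 1) * (N.choose n : ℝ) * ∫ ω, f ω ^ n ∂P := by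
  simp_rw [one_sub_one_sub_pow, ← integral_const_mul]
  exact integral_finsetSum _ fun n _ ↦ (hf n).const_mul _

lemma ProbabilityTheory.IndepFun.measureReal_lt_mul_eq_integral_Ioi [IsFiniteMeasure P]
    {I g : Ω → ℝ} (hindep : IndepFun I g P) (hI : Measurable I) (hg : Measurable g) {τ : ℝ}
    (hτ : 0 < τ) :
    P.real {ω | I ω < τ * g ω} = ∫ ω, (P.map g).real (Ioi (I ω / τ)) ∂P := by
  have hS : MeasurableSet {p : ℝ × ℝ | p.1 < τ * p.2} :=
    measurableSet_lt measurable_fst (measurable_snd.const_mul τ)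
  have htail : Measurable fun x : ℝ ↦ P.map g (Ioi (x / τ)) :=
    Antitone.measurable fun x y hxy ↦ measure_mono (Ioi_subset_Ioi (by gcongr))
  have hslice : ∀ x : ℝ, Prod.mk x ⁻¹' {p : ℝ × ℝ | p.1 < τ * p.2} = Ioi (x / τ) := fun x ↦ by
    ext y
    simp [div_lt_iff₀ hτ, mul_comm]
  have hlintegral : P {ω | I ω < τ * g ω} = ∫⁻ ω, P.map g (Ioi (I ω / τ)) ∂P := by
    simp_rw [← lintegral_map htail hI, ← hslice]
    rw [← Measure.prod_apply hS,
      ← (indepFun_iff_map_prod_eq_prod_map_map hI.aemeasurable hg.aemeasurable).mp hindep,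
      Measure.map_apply (hI.prodMk hg) hS]
    rfl
  rw [measureReal_def, hlintegral, integral_eq_lintegral_of_nonneg_ae (ae_of_all _ fun _ ↦
    measureReal_nonneg) (htail.comp hI).ennreal_toReal.aestronglyMeasurable]
  simp only [ofReal_measureReal (measure_ne_top _ _)]

end

/-- **Alternating-sum upper bound on the Gamma-smoothed interference CDF.**
Let `I` be a nonnegative random variable, `τ > 0`, `N` a positive integer,
`a_N = N·(N!)^{−1/N}`, and let `g` be a normalized-Gamma(`N`) random variable
independent of `I`.  Then
`P(I < τ·g) ≤ Σ_{n=1}^{N} (−1)^{n+1} · binom(N, n) · E[exp(−a_N n I / τ)]`. -/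
theorem smoothed_cdf_upper_bound
    {Ω : Type*} [MeasurableSpace Ω] (P : Measure Ω) [IsProbabilityMeasure P]
    (I g : Ω → ℝ) (hI : Measurable I) (hg : Measurable g)
    (hI0 : ∀ ω, 0 ≤ I ω)
    (τ : ℝ) (hτ : 0 < τ) (N : ℕ) (hN : 0 < N)
    (hlaw : Measure.map g P = gammaMeasure (N : ℝ) (N : ℝ))
    (hindep : IndepFun I g P) :
    (P {ω | I ω < τ * g ω}).toReal
      ≤ ∑ n ∈ Finset.Icc 1 N, (-1 : ℝ) ^ (n + 1) * (N.choose n : ℝ) *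
          ∫ ω, Real.exp (-((N * ((N.factorial : ℝ) ^ (-(1 : ℝ) / N))) * n * I ω) / τ) ∂P := by
  set E : Ω → ℝ := fun ω ↦ Real.exp (-(alzerConst N * I ω) / τ)
  have hE_le : ∀ ω, E ω ≤ 1 := fun ω ↦ Real.exp_le_one_iff.mpr <| div_nonpos_of_nonpos_of_nonneg
    (neg_nonpos.mpr (mul_nonneg (alzerConst_pos hN).le (hI0 ω))) hτ.le
  have hE_pow : ∀ (n : ℕ) ω, E ω ^ n
      = Real.exp (-((N * ((N.factorial : ℝ) ^ (-(1 : ℝ) / N))) * n * I ω) / τ) := fun n ω ↦ by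
    rw [← Real.exp_nat_mul, alzerConst]
    ring_nf
  have hE_int : ∀ n : ℕ, Integrable (fun ω ↦ E ω ^ n) P := fun n ↦
    Integrable.of_bound (by fun_prop) 1 <| ae_of_all _ fun ω ↦ by
      rw [norm_pow, Real.norm_of_nonneg (Real.exp_nonneg _)]
      exact pow_le_one₀ (Real.exp_nonneg _) (hE_le ω)
  calc (P {ω | I ω < τ * g ω}).toReal
      = ∫ ω, (gammaMeasure N N).real (Ioi (I ω / τ)) ∂P := by
        rw [← hlaw]
        exact hindep.measureReal_lt_mul_eq_integral_Ioi hI hg hτ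
    _ ≤ ∫ ω, 1 - (1 - E ω) ^ N ∂P := by
        refine integral_mono_of_nonneg (ae_of_all _ fun _ ↦ measureReal_nonneg) ?_
          (ae_of_all _ fun ω ↦ ?_)
        · simp_rw [one_sub_one_sub_pow]
          exact integrable_finsetSum _ fun n _ ↦ (hE_int n).const_mul _
        · refine (measureReal_Ioi_gammaMeasure_le hN (div_nonneg (hI0 ω) hτ.le)).trans_eq ?_
          simp only [alzerBound, E, mul_div_assoc, neg_div]
    _ = _ := by
        simp_rw [integral_one_sub_one_sub_pow hE_int, hE_pow]
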